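/- There exist sijections φ : S ⇒ T and ψᵢ for which the Cartesian product does not commute with composition; concretely, with S = ({A},∅), T = ({A,B},{B†}) and φ sending A↔A and B↔B† (sign-reversing on T), one has ((id_T × φ) ∘ (φ × id_S))((B,B)) = (B,B†) ≠ (B†,B) = ((φ × id_T) ∘ (id_S × φ))((B,B)); hence (ψ₁×ψ₂)∘(φ₁×φ₂) = (ψ₁∘φ₁)×(ψ₂∘φ₂) fails in general. -/

import Mathlib

/-!
The product `φ₁ × φ₂` consults `φ₂` only when `φ₁` crosses sides, so at `(B, B)` the order
of the factors decides which coordinate meets the sign-reversing involution `B ↔ B†` of `φ`.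
In `(id_T × φ) ∘ (φ × id_S)`, the identity on the first coordinate crosses, so the second
factor's `φ` acts and gives `(B, B†)`. In `(id_T ∘ φ) × (φ ∘ id_S)` the first factor
`id_T ∘ φ` already sends `B` to `B†` without crossing, so the second coordinate stays
and the result is `(B†, B)`.
-/

/-- A signed set: a pair of (disjoint) finite sets. -/
abbrev SignedSet (α : Type) := Finset α × Finset α

variable {α : Type}

/-- Membership in the plus part `S⁺ ⊔ T⁻` of the tagged disjoint union of the supports:
tag `false` means the element lives in `S`, tag `true` means it lives in `T`. -/
def memP (S T : SignedSet α) (p : α × Bool) : Prop :=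
  (p.2 = false ∧ p.1 ∈ S.1) ∨ (p.2 = true ∧ p.1 ∈ T.2)

/-- Membership in the minus part `S⁻ ⊔ T⁺`. -/
def memM (S T : SignedSet α) (p : α × Bool) : Prop :=
  (p.2 = false ∧ p.1 ∈ S.2) ∨ (p.2 = true ∧ p.1 ∈ T.1)

/-- The support of the pair `(S, T)`, as a tagged union. -/
def valid (S T : SignedSet α) (p : α × Bool) : Prop := memP S T p ∨ memM S T p

/-- `f` encodes a sijection from `S` to `T`: an involution on the tagged disjoint union
of the supports which restricts to a bijection between `S⁺ ⊔ T⁻` and `S⁻ ⊔ T⁺`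
(and which is the identity off the support). -/
structure IsSij (S T : SignedSet α) (f : α × Bool → α × Bool) : Prop where
  invol : ∀ p, f (f p) = p
  mapsP : ∀ p, memP S T p → memM S T (f p)
  mapsM : ∀ p, memM S T p → memP S T (f p)
  fix : ∀ p, ¬ valid S T p → f p = p

/-- One step of the alternating sequence `s, φ(s), ψ(φ(s)), φ(ψ(φ(s))), …` used to
compose sijections `φ : S ⇒ T` and `ψ : T ⇒ U`. A state records the current element,
its location (`0` = in `S`, `1` = in `T`, `2` = in `U`) and which map is to be applied
next (`true` = `φ`, `false` = `ψ`); the step is `none` exactly when the next map is not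
defined at the current element, i.e. when the current element is the last well-defined
one of the sequence. -/
def step (f g : α × Bool → α × Bool) : α × Fin 3 × Bool → Option (α × Fin 3 × Bool) :=
  fun q =>
    match q with
    | (x, loc, nf) =>
      if nf then
        if loc = 0 then
          some ((f (x, false)).1, if (f (x, false)).2 then 1 else 0, false)
        else if loc = 1 then
          some ((f (x, true)).1, if (f (x, true)).2 then 1 else 0, false)
        else none
      else
        if loc = 1 then
          some ((g (x, false)).1, if (g (x, false)).2 then 2 else 1, true)
        else if loc = 2 then
          some ((g (x, true)).1, if (g (x, true)).2 then 2 else 1, true)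
        else none

/-- The alternating sequence, as a partially defined sequence of states. -/
def seq (f g : α × Bool → α × Bool) (st : α × Fin 3 × Bool) : ℕ → Option (α × Fin 3 × Bool)
  | 0 => some st
  | n + 1 => (seq f g st n).bind (step f g)

/-- The starting state: an element of `S` (tag `false`) starts by applying `φ`,
an element of `U` (tag `true`) starts by applying `ψ`. -/
def start (p : α × Bool) : α × Fin 3 × Bool := (p.1, if p.2 then 2 else 0, !p.2)

/-- `y` (tagged: `false` = in `S`, `true` = in `U`) is the last well-defined element of
the alternating sequence started at `p`. -/
def IsLast (f g : α × Bool → α × Bool) (p : α × Bool) (y : α × Bool) : Prop :=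
  ∃ n st, seq f g (start p) n = some st ∧ step f g st = none ∧
    st.1 = y.1 ∧ st.2.1 = (if y.2 then 2 else 0)

open Classical in
/-- The composition `ψ ∘ φ` of (the encodings of) two sijections: each element is sent
to the last well-defined element of the alternating sequence
`s, φ(s), ψ(φ(s)), φ(ψ(φ(s))), …`. -/
noncomputable def scomp (f g : α × Bool → α × Bool) : α × Bool → α × Bool :=
  fun p => if h : ∃ y, IsLast f g p y then h.choose else p

/-- The Cartesian product of (the encodings of) two sijections `φ₁ : S₁ ⇒ T₁` and
`φ₂ : S₂ ⇒ T₂`: on an element of `S₁ × S₂` (tag `false`), apply `φ₁` to the first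
coordinate; if it stays in `S₁`, stop; otherwise apply `φ₂` to the second coordinate;
if it stays in `S₂`, keep the first coordinate; otherwise both coordinates move and the
element crosses to `T₁ × T₂`.  Symmetrically on elements of `T₁ × T₂` (tag `true`). -/
def sprodFun {α β : Type} (f : α × Bool → α × Bool) (g : β × Bool → β × Bool) :
    (α × β) × Bool → (α × β) × Bool :=
  fun p =>
    if (f (p.1.1, p.2)).2 = p.2 then (((f (p.1.1, p.2)).1, p.1.2), p.2)
    else if (g (p.1.2, p.2)).2 = p.2 then ((p.1.1, (g (p.1.2, p.2)).1), p.2)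
    else (((f (p.1.1, p.2)).1, (g (p.1.2, p.2)).1), !p.2)

/-- The Cartesian product of signed sets:
`(S × T)⁺ = S⁺×T⁺ ⊔ S⁻×T⁻` and `(S × T)⁻ = S⁺×T⁻ ⊔ S⁻×T⁺`. -/
def sprodSet {α β : Type} [DecidableEq α] [DecidableEq β]
    (S : SignedSet α) (T : SignedSet β) : SignedSet (α × β) :=
  (S.1 ×ˢ T.1 ∪ S.2 ×ˢ T.2, S.1 ×ˢ T.2 ∪ S.2 ×ˢ T.1)

/-- The signed set `S = ({A}, ∅)`, with `A = 0`. -/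
def Sex : SignedSet ℕ := ({0}, ∅)

/-- The signed set `T = ({A, B}, {B†})`, with `A = 0`, `B = 1`, `B† = 2`. -/
def Tex : SignedSet ℕ := ({0, 1}, {2})

/-- The sijection `φ : S ⇒ T` sending `A ↔ A` (across) and `B ↔ B†` (sign-reversing
within `T`). -/
def phiEx : ℕ × Bool → ℕ × Bool :=
  fun p =>
    if p = (0, false) then (0, true)
    else if p = (0, true) then (0, false)
    else if p = (1, true) then (2, true)
    else if p = (2, true) then (1, true)
    else p

/-- The identity sijection of a signed set with support `s`. -/
def idFun (s : Finset ℕ) : ℕ × Bool → ℕ × Bool :=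
  fun p => if p.1 ∈ s then (p.1, !p.2) else p

section Composition

variable {f g : α × Bool → α × Bool}

lemma seq_eq_none_of_step_eq_none {st₀ st : α × Fin 3 × Bool} {n m : ℕ}
    (hn : seq f g st₀ n = some st) (hstep : step f g st = none) (hnm : n < m) :
    seq f g st₀ m = none := by
  induction m, hnm using Nat.le_induction with
  | base => simp [seq, hn, hstep]
  | succ m _ ih => simp [seq, ih]

lemma IsLast.unique {p y y' : α × Bool} (h : IsLast f g p y) (h' : IsLast f g p y') :
    y = y' := by
  obtain ⟨n, st, hn, hstep, h1, h2⟩ := h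
  obtain ⟨n', st', hn', hstep', h1', h2'⟩ := h'
  -- the sequence stops right after the last well-defined state, so its index is determined
  have hnn' : n = n' := by
    by_contra hne
    rcases Nat.lt_or_gt_of_ne hne with hlt | hlt
    · simp [seq_eq_none_of_step_eq_none hn hstep hlt] at hn'
    · simp [seq_eq_none_of_step_eq_none hn' hstep' hlt] at hn
  subst hnn'
  obtain rfl : st = st' := Option.some.inj (hn.symm.trans hn')
  have htag : y.2 = y'.2 := by
    revert h2 h2'
    cases y.2 <;> cases y'.2 <;> simp +contextual
  exact Prod.ext (h1.symm.trans h1') htag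

lemma scomp_eq_of_isLast {p y : α × Bool} (h : IsLast f g p y) : scomp f g p = y := by
  have hex : ∃ y, IsLast f g p y := ⟨y, h⟩
  rw [scomp, dif_pos hex]
  exact hex.choose_spec.unique h

end Composition

lemma sprodFun_apply_of_snd_eq {β : Type} {f : α × Bool → α × Bool} {g : β × Bool → β × Bool}
    {x : α} {y : β} {b : Bool} (h : (f (x, b)).2 = b) :
    sprodFun f g ((x, y), b) = (((f (x, b)).1, y), b) := by
  simp [sprodFun, h]

lemma isSij_idFun {S : SignedSet ℕ} {s : Finset ℕ} (hs : S.1 ∪ S.2 = s) :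
    IsSij S S (idFun s) where
  invol := by rintro ⟨x, b⟩; by_cases hx : x ∈ s <;> simp [idFun, hx]
  mapsP := by rintro ⟨x, _ | _⟩ <;> simp_all [← hs, memP, memM, idFun]
  mapsM := by rintro ⟨x, _ | _⟩ <;> simp_all [← hs, memP, memM, idFun]
  fix := by rintro ⟨x, _ | _⟩ <;> simp_all [← hs, valid, memP, memM, idFun]

lemma isSij_phiEx : IsSij Sex Tex phiEx where
  invol := by rintro ⟨_ | _ | _ | x, _ | _⟩ <;> simp [phiEx]
  mapsP := by rintro ⟨_ | _ | _ | x, _ | _⟩ <;> simp [phiEx, memP, memM, Sex, Tex]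
  mapsM := by rintro ⟨_ | _ | _ | x, _ | _⟩ <;> simp [phiEx, memP, memM, Sex, Tex]
  fix := by rintro ⟨_ | _ | _ | x, _ | _⟩ <;> simp [phiEx, valid, memP, memM, Sex, Tex]

lemma scomp_sprodFun_phiEx_idFun :
    scomp (sprodFun phiEx (idFun {0})) (sprodFun (idFun {0, 1, 2}) phiEx) ((1, 1), true)
      = ((1, 2), true) :=
  scomp_eq_of_isLast ⟨1, ((1, 2), 2, true), by decide, by decide, rfl, rfl⟩

lemma scomp_sprodFun_idFun_phiEx :
    scomp (sprodFun (idFun {0}) phiEx) (sprodFun phiEx (idFun {0, 1, 2})) ((1, 1), true)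
      = ((2, 1), true) :=
  scomp_eq_of_isLast ⟨1, ((2, 1), 2, true), by decide, by decide, rfl, rfl⟩

lemma scomp_phiEx_idFun :
    scomp phiEx (idFun {0, 1, 2}) (1, true) = (2, true) :=
  scomp_eq_of_isLast ⟨3, (2, 2, true), by decide, by decide, rfl, rfl⟩

/-- The Cartesian product of sijections does not commute with composition:
with `S = ({A},∅)`, `T = ({A,B},{B†})` and `φ : S ⇒ T` as above,
`((id_T × φ) ∘ (φ × id_S))((B,B)) = (B,B†) ≠ (B†,B) = ((φ × id_T) ∘ (id_S × φ))((B,B))`;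
hence the law `(ψ₁ × ψ₂) ∘ (φ₁ × φ₂) = (ψ₁ ∘ φ₁) × (ψ₂ ∘ φ₂)` fails in general. -/
theorem sprod_scomp_not_commute :
    IsSij Sex Tex phiEx ∧
    IsSij Sex Sex (idFun {0}) ∧
    IsSij Tex Tex (idFun {0, 1, 2}) ∧
    scomp (sprodFun phiEx (idFun {0})) (sprodFun (idFun {0, 1, 2}) phiEx) ((1, 1), true)
      = ((1, 2), true) ∧
    scomp (sprodFun (idFun {0}) phiEx) (sprodFun phiEx (idFun {0, 1, 2})) ((1, 1), true)
      = ((2, 1), true) ∧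
    ((((1, 2) : ℕ × ℕ), true) : (ℕ × ℕ) × Bool) ≠ (((2, 1) : ℕ × ℕ), true) ∧
    ¬ (∀ (S₁ T₁ U₁ S₂ T₂ U₂ : SignedSet ℕ) (f₁ g₁ f₂ g₂ : ℕ × Bool → ℕ × Bool),
        IsSij S₁ T₁ f₁ → IsSij T₁ U₁ g₁ → IsSij S₂ T₂ f₂ → IsSij T₂ U₂ g₂ →
        ∀ p, valid (sprodSet S₁ S₂) (sprodSet U₁ U₂) p →
          scomp (sprodFun f₁ f₂) (sprodFun g₁ g₂) p =
            sprodFun (scomp f₁ g₁) (scomp f₂ g₂) p) := by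
  have hφ := isSij_phiEx
  have hidS : IsSij Sex Sex (idFun {0}) := isSij_idFun (by decide)
  have hidT : IsSij Tex Tex (idFun {0, 1, 2}) := isSij_idFun (by decide)
  refine ⟨hφ, hidS, hidT, scomp_sprodFun_phiEx_idFun, scomp_sprodFun_idFun_phiEx,
    by decide, fun hlaw => ?_⟩
  have hBB : valid (sprodSet Sex Sex) (sprodSet Tex Tex) ((1, 1), true) :=
    Or.inr (Or.inr ⟨rfl, by decide⟩)
  have h := hlaw Sex Tex Tex Sex Sex Tex phiEx (idFun {0, 1, 2}) (idFun {0}) phiEx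
    hφ hidT hidS hφ ((1, 1), true) hBB
  rw [scomp_sprodFun_phiEx_idFun, sprodFun_apply_of_snd_eq (by rw [scomp_phiEx_idFun]),
    scomp_phiEx_idFun] at h
  exact absurd h (by decide)
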